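/- arXiv:2112.06599 — 5 statements merged into one kernel-verified Lean document; each statement's English description precedes it below -/
import Mathlib

section
/- If n = p₁^{α₁} ⋯ p_k^{α_k} with primes p₁ < p₂ < ⋯ < p_k, then ψ(C_n) ≥ (p₁/(p_k + 1)) · n². -/
open Finset

/-- The order of `x` relative to the subgroup `H`: the least positive `m` with `x ^ m ∈ H`. -/
noncomputable def relOrder {G : Type*} [Group G] (H : Subgroup G) (x : G) : ℕ :=
  sInf {m : ℕ | 0 < m ∧ x ^ m ∈ H}

/-- `ψ_H(G)`, the sum of element orders of `G` relative to the subgroup `H`. -/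
noncomputable def psiRel (G : Type*) [Group G] [Fintype G] (H : Subgroup G) : ℕ :=
  ∑ x : G, relOrder H x

/-- `ψ(G)`, the sum of element orders of `G`. -/
noncomputable def psi (G : Type*) [Group G] [Fintype G] : ℕ :=
  ∑ x : G, orderOf x

/-!
A cyclic group of order `n` has `φ d` elements of order `d` for each `d ∣ n`, so
`ψ(C_n) = ∑_{d ∣ n} d φ(d)`, a multiplicative function of `n`. At a prime power it is
`(p^{2a+1} + 1) / (p + 1) ≥ p/(p+1) · (p^a)²`, hence `ψ(C_n) ≥ n² ∏_{p ∣ n} p/(p+1)`.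
Consecutive prime divisors differ by at least one, so this product telescopes to at least
`p₁/(p_k + 1)`.
-/

open ArithmeticFunction
open scoped ArithmeticFunction.zeta

noncomputable def sumDivisorsMulTotient : ArithmeticFunction ℕ :=
  (ArithmeticFunction.id.pmul ⟨Nat.totient, Nat.totient_zero⟩) * ζ

theorem sumDivisorsMulTotient_apply (n : ℕ) :
    sumDivisorsMulTotient n = ∑ d ∈ n.divisors, d * d.totient := by
  rw [sumDivisorsMulTotient, mul_zeta_apply]
  rfl

theorem isMultiplicative_sumDivisorsMulTotient : sumDivisorsMulTotient.IsMultiplicative := by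
  have isMultiplicative_totient : IsMultiplicative ⟨Nat.totient, Nat.totient_zero⟩ :=
    ⟨Nat.totient_one, Nat.totient_mul⟩
  exact (isMultiplicative_id.pmul isMultiplicative_totient).mul isMultiplicative_zeta

theorem psi_eq_sumDivisorsMulTotient (G : Type*) [Group G] [Fintype G] [IsCyclic G] :
    psi G = sumDivisorsMulTotient (Fintype.card G) := by
  classical
  have horder : ∀ x ∈ (univ : Finset G), orderOf x ∈ (Fintype.card G).divisors :=
    fun x _ => Nat.mem_divisors.mpr ⟨orderOf_dvd_card, Fintype.card_ne_zero⟩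
  rw [psi, sumDivisorsMulTotient_apply, ← sum_fiberwise_of_maps_to horder]
  refine sum_congr rfl fun d hd => ?_
  rw [sum_congr rfl fun x hx => (mem_filter.mp hx).2, sum_const, smul_eq_mul,
    IsCyclic.card_orderOf_eq_totient (Nat.dvd_of_mem_divisors hd), mul_comm]

theorem succ_mul_sumDivisorsMulTotient_prime_pow {p : ℕ} (hp : p.Prime) (a : ℕ) :
    (p + 1) * sumDivisorsMulTotient (p ^ a) = p ^ (2 * a + 1) + 1 := by
  rw [sumDivisorsMulTotient_apply, Nat.sum_divisors_prime_pow hp]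
  induction a with
  | zero => simp
  | succ a ih =>
    obtain ⟨q, rfl⟩ : ∃ q, p = q + 1 := ⟨p - 1, (Nat.sub_add_cancel hp.one_le).symm⟩
    rw [sum_range_succ, mul_add, ih, Nat.totient_prime_pow hp a.succ_pos, Nat.succ_sub_one,
      Nat.add_sub_cancel]
    ring

variable {K : Type*} [Field K] [LinearOrder K] [IsStrictOrderedRing K]

theorem div_succ_mul_sq_le_sumDivisorsMulTotient_prime_pow {p : ℕ} (hp : p.Prime) (a : ℕ) :
    (p : K) / (p + 1) * ((p ^ a : ℕ) : K) ^ 2 ≤ sumDivisorsMulTotient (p ^ a) := by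
  have hcast : ((p : K) + 1) * sumDivisorsMulTotient (p ^ a) = p ^ (2 * a + 1) + 1 := by
    exact_mod_cast succ_mul_sumDivisorsMulTotient_prime_pow hp a
  rw [div_mul_eq_mul_div, div_le_iff₀ (by positivity), mul_comm _ ((p : K) + 1), hcast]
  push_cast
  rw [← pow_mul, mul_comm a 2, ← pow_succ']
  linarith

theorem sq_mul_prod_primeFactors_le_sumDivisorsMulTotient {n : ℕ} (hn : n ≠ 0) :
    (n : K) ^ 2 * ∏ p ∈ n.primeFactors, (p : K) / (p + 1) ≤ sumDivisorsMulTotient n := by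
  have hfactor : ∏ p ∈ n.primeFactors, ((p ^ n.factorization p : ℕ) : K) = n := by
    rw [← Nat.cast_prod, ← Nat.support_factorization, ← Finsupp.prod,
      Nat.prod_factorization_pow_eq_self hn]
  rw [isMultiplicative_sumDivisorsMulTotient.multiplicative_factorization _ hn, Finsupp.prod,
    Nat.support_factorization, Nat.cast_prod, ← hfactor, ← prod_pow, ← prod_mul_distrib]
  refine prod_le_prod (fun p _ => by positivity) fun p hp => ?_
  rw [mul_comm]
  exact div_succ_mul_sq_le_sumDivisorsMulTotient_prime_pow (Nat.prime_of_mem_primeFactors hp) _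

theorem div_succ_le_prod_div_succ {S : Finset ℕ} (hS : S.Nonempty) {m M : ℕ}
    (hm : ∀ p ∈ S, m ≤ p) (hM : ∀ p ∈ S, p ≤ M) :
    (m : K) / (M + 1) ≤ ∏ p ∈ S, (p : K) / (p + 1) := by
  induction S using Finset.induction_on_max generalizing M with
  | empty => exact absurd hS not_nonempty_empty
  | insert a T hlt ih =>
    rw [prod_insert fun h => (hlt a h).false]
    have haM : (a : K) ≤ M := by exact_mod_cast hM a (mem_insert_self a T)
    rcases T.eq_empty_or_nonempty with rfl | hT
    · have hma : (m : K) ≤ a := by exact_mod_cast hm a (mem_insert_self a ∅)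
      rw [prod_empty, mul_one]
      calc (m : K) / (M + 1) ≤ a / (M + 1) := by gcongr
        _ ≤ a / (a + 1) := by gcongr
    · have hTa : (T.max' hT : K) + 1 ≤ a := by exact_mod_cast hlt _ (T.max'_mem hT)
      have ihT := ih (M := T.max' hT) hT (fun p hp => hm p (mem_insert_of_mem hp))
        fun p hp => T.le_max' p hp
      calc (m : K) / (M + 1) ≤ m / (a + 1) := by gcongr
        _ = a / (a + 1) * (m / a) := by
          field_simp [(lt_of_lt_of_le (by positivity) hTa).ne']
        _ ≤ a / (a + 1) * (m / (T.max' hT + 1)) := by gcongr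
        _ ≤ a / (a + 1) * ∏ p ∈ T, (p : K) / (p + 1) := by gcongr

theorem psi_cyclic_ge_general (n p₁ pk : ℕ) [NeZero n] (hn : 1 < n)
    (hp₁ : p₁ = n.minFac)
    (hpkmax : ∀ p : ℕ, p.Prime → p ∣ n → p ≤ pk) :
    ((p₁ : ℚ) / (pk + 1)) * (n : ℚ) ^ 2 ≤ (psi (Multiplicative (ZMod n)) : ℚ) := by
  have hprod : (p₁ : ℚ) / (pk + 1) ≤ ∏ p ∈ n.primeFactors, (p : ℚ) / (p + 1) := by
    refine div_succ_le_prod_div_succ (Nat.nonempty_primeFactors.mpr hn) (fun p hp => ?_)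
      fun p hp => hpkmax p (Nat.prime_of_mem_primeFactors hp) (Nat.dvd_of_mem_primeFactors hp)
    exact hp₁ ▸ Nat.minFac_le_of_dvd (Nat.prime_of_mem_primeFactors hp).two_le
      (Nat.dvd_of_mem_primeFactors hp)
  rw [psi_eq_sumDivisorsMulTotient, Fintype.card_multiplicative, ZMod.card, mul_comm]
  calc (n : ℚ) ^ 2 * (p₁ / (pk + 1))
      ≤ n ^ 2 * ∏ p ∈ n.primeFactors, (p : ℚ) / (p + 1) := by gcongr
    _ ≤ (sumDivisorsMulTotient n : ℚ) :=
      sq_mul_prod_primeFactors_le_sumDivisorsMulTotient (NeZero.ne n)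

theorem psi_cyclic_ge (n p₁ pk : ℕ) [NeZero n] (hn : 1 < n)
    (hp₁ : p₁ = n.minFac)
    (hpk : pk.Prime) (hpkdvd : pk ∣ n) (hpkmax : ∀ p : ℕ, p.Prime → p ∣ n → p ≤ pk) :
    ((p₁ : ℚ) / (pk + 1)) * (n : ℚ) ^ 2 ≤ (psi (Multiplicative (ZMod n)) : ℚ) :=
  psi_cyclic_ge_general n p₁ pk hn hp₁ hpkmax
end

section
/- Let G₁, …, G_s be finite groups of pairwise coprime orders and H_i ≤ G_i for each i. Then ψ_{H₁ × ⋯ × H_s}(G₁ × ⋯ × G_s) = ∏_{i=1}^s ψ_{H_i}(G_i). -/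
open Finset

lemma relOrder_spec {G : Type*} [Group G] [Fintype G] (H : Subgroup G) (x : G) :
    0 < relOrder H x ∧ x ^ relOrder H x ∈ H := by
  have hne : {m : ℕ | 0 < m ∧ x ^ m ∈ H}.Nonempty :=
    ⟨orderOf x, orderOf_pos x, by rw [pow_orderOf_eq_one]; exact H.one_mem⟩
  exact Nat.sInf_mem hne

lemma relOrder_dvd_iff {G : Type*} [Group G] [Fintype G] (H : Subgroup G) (x : G) (m : ℕ) :
    relOrder H x ∣ m ↔ x ^ m ∈ H := by
  obtain ⟨hd, hxd⟩ := relOrder_spec H x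
  constructor
  · rintro ⟨k, rfl⟩
    rw [pow_mul]
    exact H.pow_mem hxd k
  · intro hm
    set d := relOrder H x with hdef
    have hmem : x ^ (m % d) ∈ H := by
      have h1 : x ^ (d * (m / d)) ∈ H := by
        rw [pow_mul]; exact H.pow_mem hxd _
      have h2 : x ^ (d * (m / d)) * x ^ (m % d) = x ^ m := by
        rw [← pow_add, Nat.div_add_mod]
      have := H.mul_mem (H.inv_mem h1) hm
      rwa [← h2, inv_mul_cancel_left] at this
    rcases Nat.eq_zero_or_pos (m % d) with h0 | hpos
    · exact Nat.dvd_of_mod_eq_zero h0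
    · have hle : d ≤ m % d := Nat.sInf_le ⟨hpos, hmem⟩
      have : m % d < d := Nat.mod_lt _ hd
      omega

lemma nat_prod_dvd {ι : Type*} (t : Finset ι) (f : ι → ℕ) (d : ℕ)
    (hcop : ∀ i ∈ t, ∀ j ∈ t, i ≠ j → Nat.Coprime (f i) (f j))
    (hdvd : ∀ i ∈ t, f i ∣ d) : ∏ i ∈ t, f i ∣ d := by
  classical
  induction t using Finset.induction_on with
  | empty => simp
  | @insert a t ha ih =>
    rw [Finset.prod_insert ha]
    have hc : Nat.Coprime (f a) (∏ i ∈ t, f i) :=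
      Nat.Coprime.prod_right fun i hi =>
        hcop a (Finset.mem_insert_self a t) i (Finset.mem_insert_of_mem hi)
          (fun h => ha (h ▸ hi))
    exact hc.mul_dvd_of_dvd_of_dvd (hdvd a (Finset.mem_insert_self a t))
      (ih (fun i hi j hj hij => hcop i (Finset.mem_insert_of_mem hi) j
        (Finset.mem_insert_of_mem hj) hij) (fun i hi => hdvd i (Finset.mem_insert_of_mem hi)))

lemma relOrder_pi {s : ℕ} (G : Fin s → Type*) [∀ i, Group (G i)] [∀ i, Fintype (G i)]
    (H : ∀ i, Subgroup (G i))
    (hcop : ∀ i j, i ≠ j → Nat.Coprime (Fintype.card (G i)) (Fintype.card (G j)))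
    (x : ∀ i, G i) :
    relOrder (Subgroup.pi Set.univ H) x = ∏ i, relOrder (H i) (x i) := by
  have key : ∀ m : ℕ, relOrder (Subgroup.pi Set.univ H) x ∣ m ↔
      ∀ i, relOrder (H i) (x i) ∣ m := by
    intro m
    rw [relOrder_dvd_iff, Subgroup.mem_pi]
    constructor
    · intro h i
      rw [relOrder_dvd_iff]
      simpa using h i (Set.mem_univ i)
    · intro h i _
      have := (relOrder_dvd_iff (H i) (x i) m).1 (h i)
      simpa using this
  have hdvdcard : ∀ i, relOrder (H i) (x i) ∣ Fintype.card (G i) := fun i =>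
    (relOrder_dvd_iff _ _ _).2 (by rw [pow_card_eq_one]; exact (H i).one_mem)
  apply Nat.dvd_antisymm
  · exact (key _).2 fun i => Finset.dvd_prod_of_mem _ (Finset.mem_univ i)
  · exact nat_prod_dvd _ _ _
      (fun i _ j _ hij => ((hcop i j hij).coprime_dvd_left (hdvdcard i)).coprime_dvd_right
        (hdvdcard j))
      (fun i _ => (key _).1 dvd_rfl i)

theorem psiRel_pi {s : ℕ} (G : Fin s → Type*) [∀ i, Group (G i)] [∀ i, Fintype (G i)]
    (H : ∀ i, Subgroup (G i))
    (hcop : ∀ i j, i ≠ j → Nat.Coprime (Fintype.card (G i)) (Fintype.card (G j)))  :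
    psiRel (∀ i, G i) (Subgroup.pi Set.univ H) = ∏ i, psiRel (G i) (H i) := by
  unfold psiRel
  rw [Fintype.prod_sum (fun i (y : G i) => relOrder (H i) y)]
  exact Finset.sum_congr rfl fun x _ => relOrder_pi G H hcop x
end

section
/- Let G be a finite group and H a subgroup of index q. Then ψ_H(G) ≤ |H| · (q² − q + 1). -/
open Finset

lemma relOrder_eq_one {G : Type*} [Group G] (H : Subgroup G) {x : G} (hx : x ∈ H) :
    relOrder H x = 1 := by
  have h1 : relOrder H x ≤ 1 := Nat.sInf_le ⟨one_pos, by simpa⟩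
  have h2 := Nat.sInf_mem (⟨1, one_pos, by simpa⟩ :
    ({m : ℕ | 0 < m ∧ x ^ m ∈ H}).Nonempty)
  have h3 : 0 < relOrder H x := h2.1
  omega

lemma relOrder_le_index {G : Type*} [Group G] [Fintype G] (H : Subgroup G) (x : G) :
    relOrder H x ≤ H.index := by
  classical
  have hfin : Fintype (G ⧸ H) := Fintype.ofFinite _
  have hcard : Fintype.card (G ⧸ H) < Fintype.card (Fin (H.index + 1)) := by
    have : Fintype.card (G ⧸ H) = H.index := by
      rw [Subgroup.index, Nat.card_eq_fintype_card]
    simp [this]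
  obtain ⟨i, j, hne, heq⟩ := Fintype.exists_ne_map_eq_of_card_lt
    (fun i : Fin (H.index + 1) => (QuotientGroup.mk (x ^ (i : ℕ)) : G ⧸ H)) hcard
  wlog hij : (i : ℕ) < (j : ℕ) generalizing i j
  · have hne' : (i : ℕ) ≠ (j : ℕ) := fun h => hne (Fin.ext h)
    exact this j i hne.symm heq.symm (by omega)
  have key : x ^ (i : ℕ) * x ^ ((j : ℕ) - (i : ℕ)) = x ^ (j : ℕ) := by
    rw [← pow_add]; congr 1; omega
  have hmem : x ^ ((j : ℕ) - (i : ℕ)) ∈ H := by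
    have h := (QuotientGroup.eq).mp heq
    rwa [show x ^ ((j : ℕ) - (i : ℕ)) = (x ^ (i : ℕ))⁻¹ * x ^ (j : ℕ) from
      eq_inv_mul_iff_mul_eq.mpr key]
  have := Nat.sInf_le (show (j : ℕ) - (i : ℕ) ∈ {m : ℕ | 0 < m ∧ x ^ m ∈ H} from ⟨by omega, hmem⟩)
  calc relOrder H x ≤ (j : ℕ) - (i : ℕ) := this
    _ ≤ H.index := by have := j.is_le; omega

theorem psiRel_le {G : Type*} [Group G] [Fintype G] (H : Subgroup G) :
    psiRel G H ≤ Nat.card H * (H.index ^ 2 - H.index + 1) := by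
  classical
  obtain ⟨r, hr⟩ : ∃ r, H.index = r + 1 :=
    ⟨H.index - 1, by have := H.index_ne_zero_of_finite; omega⟩
  have hcardH : (univ.filter (· ∈ H)).card = Nat.card H := by
    rw [Nat.card_eq_fintype_card, Fintype.card_subtype]
  have hG : Nat.card G = Nat.card H * H.index := (H.card_mul_index).symm
  have hGle : Fintype.card G = Nat.card H * H.index := by
    rw [← Nat.card_eq_fintype_card, hG]
  have hsplit := Finset.card_filter_add_card_filter_not (s := (univ : Finset G))
    (p := (· ∈ H))
  rw [Finset.card_univ, hGle, hcardH] at hsplit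
  have hcardnot : (univ.filter (fun x => ¬ x ∈ H)).card = Nat.card H * r := by
    rw [hr] at hsplit
    have : Nat.card H * (r + 1) = Nat.card H * r + Nat.card H := by ring
    omega
  rw [psiRel, ← Finset.sum_filter_add_sum_filter_not univ (· ∈ H)]
  have h1 : ∑ x ∈ univ.filter (· ∈ H), relOrder H x = Nat.card H := by
    rw [Finset.sum_congr rfl (fun x hx => relOrder_eq_one H (Finset.mem_filter.mp hx).2),
      Finset.sum_const, smul_eq_mul, mul_one, hcardH]
  have h2 : ∑ x ∈ univ.filter (fun x => ¬ x ∈ H), relOrder H x ≤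
      Nat.card H * r * H.index := by
    calc ∑ x ∈ univ.filter (fun x => ¬ x ∈ H), relOrder H x
        ≤ ∑ _x ∈ univ.filter (fun x => ¬ x ∈ H), H.index :=
          Finset.sum_le_sum (fun x _ => relOrder_le_index H x)
      _ = Nat.card H * r * H.index := by
          rw [Finset.sum_const, smul_eq_mul, hcardnot]
  calc (∑ x ∈ univ.filter (· ∈ H), relOrder H x) +
        ∑ x ∈ univ.filter (fun x => ¬ x ∈ H), relOrder H x
      ≤ Nat.card H + Nat.card H * r * H.index := by omega
    _ ≤ Nat.card H * (H.index ^ 2 - H.index + 1) := by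
        rw [hr]
        have he : (r + 1) ^ 2 - (r + 1) + 1 = r * r + r + 1 := by
          have : (r + 1) ^ 2 = r * r + 2 * r + 1 := by ring
          rw [this]; omega
        rw [he]
        nlinarith [Nat.zero_le (Nat.card H)]
end

section
/- Let G be a Frobenius group with kernel K ≅ (C_p)^r and complement H ≅ C_{p^r−1} (constructed from the field F_{p^r}). Then ψ_H(G) = (p^r − 1)(ψ(C_{p^r−1}) + p). -/
open Finset

/-- The action of the multiplicative group of a field `F` on the additive group of `F`
(written multiplicatively), by field multiplication. -/
def fieldMulAction (F : Type*) [Field F] : Fˣ →* MulAut (Multiplicative F) where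
  toFun u :=
    { toFun := fun x => Multiplicative.ofAdd (u • x.toAdd)
      invFun := fun x => Multiplicative.ofAdd (u⁻¹ • x.toAdd)
      left_inv := fun x => by simp
      right_inv := fun x => by simp
      map_mul' := fun x y => by
        simp [← ofAdd_add, smul_add] }
  map_one' := by
    ext x; simp
  map_mul' := fun u v => by
    ext x; simp [mul_smul]

instance semidirectFintype {N G : Type*} [Group N] [Group G] [Fintype N] [Fintype G]
    (φ : G →* MulAut N) : Fintype (N ⋊[φ] G) :=
  Fintype.ofEquiv (N × G)
    { toFun := fun p => ⟨p.1, p.2⟩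
      invFun := fun g => (g.1, g.2)
      left_inv := fun _ => rfl
      right_inv := fun _ => rfl }

/-- The Frobenius group `F ⋊ Fˣ` built from a field `F`. -/
abbrev frobGroup (F : Type*) [Field F] := Multiplicative F ⋊[fieldMulAction F] Fˣ

/-- The Frobenius complement: the copy of `Fˣ` inside `frobGroup F`. -/
abbrev frobComplement (F : Type*) [Field F] : Subgroup (frobGroup F) :=
  (SemidirectProduct.inr : Fˣ →* frobGroup F).range

lemma sInf_pos_dvd (d : ℕ) (hd : 0 < d) : sInf {m : ℕ | 0 < m ∧ d ∣ m} = d := by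
  have hmem : d ∈ {m : ℕ | 0 < m ∧ d ∣ m} := ⟨hd, dvd_rfl⟩
  refine le_antisymm (Nat.sInf_le hmem) ?_
  have h := Nat.sInf_mem (⟨d, hmem⟩ : Set.Nonempty _)
  exact Nat.le_of_dvd h.1 h.2

lemma mem_frobComplement_iff {F : Type*} [Field F] (x : frobGroup F) :
    x ∈ frobComplement F ↔ x.left = 1 := by
  constructor
  · rintro ⟨u, rfl⟩; rfl
  · intro h
    exact ⟨x.right, SemidirectProduct.ext h.symm rfl⟩

lemma frob_pow {F : Type*} [Field F] (a : Multiplicative F) (u : Fˣ) (m : ℕ) :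
    ((⟨a, u⟩ : frobGroup F)) ^ m
      = ⟨Multiplicative.ofAdd ((∑ i ∈ Finset.range m, (u : F) ^ i) * a.toAdd), u ^ m⟩ := by
  induction m with
  | zero =>
      refine SemidirectProduct.ext ?_ ?_ <;> simp
  | succ n ih =>
      rw [pow_succ, ih, SemidirectProduct.mul_def]
      refine SemidirectProduct.ext ?_ ?_
      · show Multiplicative.ofAdd _ * (fieldMulAction F (u ^ n)) a = _
        simp only [fieldMulAction, MonoidHom.coe_mk, OneHom.coe_mk,
          MulEquiv.coe_mk, Equiv.coe_fn_mk, ← ofAdd_add, Finset.sum_range_succ, add_mul,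
          Units.smul_def, Units.val_pow_eq_pow_val, smul_eq_mul]
      · show u ^ n * u = u ^ (n + 1)
        rw [pow_succ]

lemma relOrder_frob {F : Type*} [Field F] [Fintype F] [DecidableEq F] {p : ℕ} [CharP F p]
    (hp : p.Prime)
    (a : Multiplicative F) (u : Fˣ) :
    relOrder (frobComplement F) (⟨a, u⟩ : frobGroup F)
      = if a = 1 then 1 else if u = 1 then p else orderOf u := by
  have key : ∀ m : ℕ, ((⟨a, u⟩ : frobGroup F) ^ m ∈ frobComplement F)
      ↔ (∑ i ∈ Finset.range m, (u : F) ^ i) * a.toAdd = 0 := by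
    intro m
    rw [mem_frobComplement_iff, frob_pow]
    exact ofAdd_eq_one
  unfold relOrder
  by_cases ha : a = 1
  · have hset : {m : ℕ | 0 < m ∧ (⟨a, u⟩ : frobGroup F) ^ m ∈ frobComplement F}
        = {m : ℕ | 0 < m ∧ 1 ∣ m} := by
      ext m
      rw [Set.mem_setOf_eq, Set.mem_setOf_eq, key, ha]
      simp
    rw [if_pos ha, hset, sInf_pos_dvd 1 one_pos]
  · rw [if_neg ha]
    have ha' : a.toAdd ≠ 0 := by
      simpa [← ofAdd_eq_one] using ha
    by_cases hu : u = 1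
    · rw [if_pos hu]
      have hset : {m : ℕ | 0 < m ∧ (⟨a, u⟩ : frobGroup F) ^ m ∈ frobComplement F}
          = {m : ℕ | 0 < m ∧ p ∣ m} := by
        ext m
        refine and_congr_right fun _ => ?_
        rw [key]
        simp only [hu, Units.val_one, one_pow, Finset.sum_const, Finset.card_range,
          nsmul_eq_mul, mul_one]
        rw [mul_eq_zero, or_iff_left ha', CharP.cast_eq_zero_iff F p m]
      rw [hset, sInf_pos_dvd p hp.pos]
    · rw [if_neg hu]
      have hu' : (u : F) - 1 ≠ 0 := by
        intro h
        exact hu (Units.ext (by rw [Units.val_one]; exact sub_eq_zero.mp h))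
      have hset : {m : ℕ | 0 < m ∧ (⟨a, u⟩ : frobGroup F) ^ m ∈ frobComplement F}
          = {m : ℕ | 0 < m ∧ orderOf u ∣ m} := by
        ext m
        refine and_congr_right fun _ => ?_
        rw [key, mul_eq_zero, or_iff_left ha', orderOf_dvd_iff_pow_eq_one]
        constructor
        · intro h
          have hg := geom_sum_mul (u : F) m
          rw [h, zero_mul] at hg
          have h1 : (u : F) ^ m = 1 := sub_eq_zero.mp hg.symm
          exact Units.ext (by rw [Units.val_pow_eq_pow_val, h1, Units.val_one])
        · intro h
          have h' : (u : F) ^ m = 1 := by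
            rw [← Units.val_pow_eq_pow_val, h, Units.val_one]
          have hg := geom_sum_mul (u : F) m
          rw [h', sub_self] at hg
          exact (mul_eq_zero.mp hg).resolve_right hu'
      rw [hset, sInf_pos_dvd _ (orderOf_pos u)]

theorem psiRel_frobenius (p r : ℕ) (hp : p.Prime) (hr : 3 ≤ r)
    (F : Type*) [Field F] [Fintype F] [DecidableEq F] (hF : Fintype.card F = p ^ r)
    [NeZero (p ^ r - 1)] :
    psiRel (frobGroup F) (frobComplement F) =
      (p ^ r - 1) * (psi (Multiplicative (ZMod (p ^ r - 1))) + p) := by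
  -- the characteristic of `F` is `p`
  have h0 : ((p ^ r : ℕ) : F) = 0 := by rw [← hF]; exact FiniteField.cast_card_eq_zero F
  have hprime : (ringChar F).Prime := CharP.char_is_prime F (ringChar F)
  have hcharp : ringChar F = p :=
    (Nat.prime_dvd_prime_iff_eq hprime hp).mp
      (hprime.dvd_of_dvd_pow ((ringChar.spec F (p ^ r)).mp h0))
  have hchar : CharP F p := hcharp ▸ ringChar.charP F
  -- cardinalities
  have hcardF : Fintype.card (Multiplicative F) = p ^ r := by
    rw [Fintype.card_multiplicative, hF]
  have hcardU : Fintype.card Fˣ = p ^ r - 1 := by rw [Fintype.card_units, hF]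
  -- `ψ(Fˣ) = ψ(ZMod (p^r - 1))`
  have e : Multiplicative (ZMod (p ^ r - 1)) ≃* Fˣ :=
    mulEquivOfCyclicCardEq (by
      rw [Nat.card_eq_fintype_card, Nat.card_eq_fintype_card, hcardU,
        Fintype.card_multiplicative, ZMod.card])
  have hpsi : psi (Multiplicative (ZMod (p ^ r - 1))) = ∑ u : Fˣ, orderOf u := by
    unfold psi
    exact Fintype.sum_equiv e.toEquiv _ _
      (fun x => (orderOf_injective e.toMonoidHom e.injective x).symm)
  -- rewrite the sum over the semidirect product as a double sum
  have hsum : psiRel (frobGroup F) (frobComplement F)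
      = ∑ a : Multiplicative F, ∑ u : Fˣ, relOrder (frobComplement F) ⟨a, u⟩ := by
    have heq := Fintype.sum_equiv
      (⟨fun p => ⟨p.1, p.2⟩, fun g => (g.left, g.right), fun _ => rfl, fun _ => rfl⟩ :
        (Multiplicative F × Fˣ) ≃ frobGroup F)
      (fun q : Multiplicative F × Fˣ => relOrder (frobComplement F) ⟨q.1, q.2⟩)
      (relOrder (frobComplement F)) (fun _ => rfl)
    rw [psiRel, ← heq, Fintype.sum_prod_type]
  rw [hsum, Finset.sum_comm]
  -- inner sums
  have step1 : ∀ u : Fˣ, ∑ a : Multiplicative F, relOrder (frobComplement F) ⟨a, u⟩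
      = 1 + (p ^ r - 1) * (if u = 1 then p else orderOf u) := by
    intro u
    rw [Finset.sum_congr rfl (fun a _ => relOrder_frob hp a u), Finset.sum_ite,
      Finset.sum_const, Finset.sum_const, smul_eq_mul, mul_one, smul_eq_mul]
    congr 1
    · simp [Finset.filter_eq']
    · congr 1
      rw [Finset.filter_not, Finset.card_sdiff_of_subset (Finset.filter_subset _ _)]
      simp [Finset.filter_eq', hcardF, Finset.card_univ]
  rw [Finset.sum_congr rfl (fun u _ => step1 u), Finset.sum_add_distrib,
    Finset.sum_const, ← Finset.mul_sum]
  have hg : ∑ u : Fˣ, (if u = 1 then p else orderOf u)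
      = (∑ u : Fˣ, orderOf u) + (p - 1) := by
    have hpt : ∀ u : Fˣ, (if u = 1 then p else orderOf u)
        = orderOf u + (if u = 1 then p - 1 else 0) := by
      intro u
      by_cases h : u = 1
      · subst h
        rw [if_pos rfl, if_pos rfl, orderOf_one]
        have : 2 ≤ p := hp.two_le
        omega
      · simp [h]
    rw [Finset.sum_congr rfl fun u _ => hpt u, Finset.sum_add_distrib,
      Fintype.sum_ite_eq' 1 (fun _ => p - 1)]
  rw [hg, Finset.card_univ, hcardU, ← hpsi, smul_eq_mul, mul_one]
  have h2 : 2 ≤ p := hp.two_le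
  set ψ := psi (Multiplicative (ZMod (p ^ r - 1)))
  have harith : ψ + p = 1 + (ψ + (p - 1)) := by omega
  rw [harith]
  ring
end

section
/- Let G = (C₂)³ ⋊ C₇ be the Frobenius group built from the field F₈ (SmallGroup(56,11)) and let H be its Frobenius complement of order 7. Then ψ_H(G) / ψ_{H₇}(C₅₆) = 45/43 > 1, where H₇ is the unique subgroup of order 7 of C₅₆. -/
open Finset

/-! For normal `H`, `x ^ m ∈ H` iff the order of `xH` divides `m`, so `ψ_H(G) = |H| · ψ(G ⧸ H)`;
as `C₅₆ ⧸ H₇` is cyclic of order 8, the denominator is `7 · ψ(C₈) = 7 · 43`.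
In `F ⋊ Fˣ` we have `(n, u) ^ m ∈ Fˣ` iff `n = 0` or `1 + u + ⋯ + u ^ (m - 1) = 0`, so the relative
order of `(n, u)` is `1`, `char F` or the order of `u`; summing gives
`(|F| - 1) · (char F + ψ(Fˣ)) = 7 · (2 + 43)` for the numerator. -/

section RelOrder

variable {G : Type*} [Group G]

theorem pow_mem_iff_relOrder_dvd (H : Subgroup G) (x : G) (m : ℕ) :
    x ^ m ∈ H ↔ relOrder H x ∣ m := by
  set S := {m : ℕ | 0 < m ∧ x ^ m ∈ H}
  by_cases hS : S.Nonempty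
  · obtain ⟨hpos, hmem⟩ : 0 < relOrder H x ∧ x ^ relOrder H x ∈ H := Nat.sInf_mem hS
    refine ⟨fun hm => ?_, fun ⟨k, hk⟩ => hk ▸ pow_mul x _ k ▸ H.pow_mem hmem k⟩
    have hrem : x ^ (m % relOrder H x) ∈ H := by
      have hsplit := Nat.div_add_mod m (relOrder H x)
      rw [← hsplit, pow_add, pow_mul] at hm
      exact (H.mul_mem_cancel_left (H.pow_mem hmem _)).mp hm
    by_contra hndvd
    have hrem_pos : 0 < m % relOrder H x := Nat.pos_of_ne_zero (mt Nat.dvd_of_mod_eq_zero hndvd)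
    exact absurd (Nat.sInf_le ⟨hrem_pos, hrem⟩ : relOrder H x ≤ _) (not_le.mpr (Nat.mod_lt m hpos))
  -- no positive power lies in `H`, and `relOrder` takes the junk value `sInf ∅ = 0`
  · have h0 : relOrder H x = 0 := by
      change sInf S = 0
      rw [Set.not_nonempty_iff_eq_empty.mp hS, Nat.sInf_empty]
    rw [h0, zero_dvd_iff]
    refine ⟨fun hm => ?_, fun hm => hm ▸ (pow_zero x).symm ▸ H.one_mem⟩
    by_contra hm0
    exact hS ⟨m, Nat.pos_of_ne_zero hm0, hm⟩

theorem relOrder_eq_of_pow_mem_iff {H : Subgroup G} {x : G} {n : ℕ}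
    (h : ∀ m, x ^ m ∈ H ↔ n ∣ m) : relOrder H x = n :=
  Nat.dvd_antisymm ((pow_mem_iff_relOrder_dvd H x n).mp ((h n).mpr dvd_rfl))
    ((h _).mp ((pow_mem_iff_relOrder_dvd H x _).mpr dvd_rfl))

theorem relOrder_eq_orderOf_mk (H : Subgroup G) [H.Normal] (x : G) :
    relOrder H x = orderOf (x : G ⧸ H) :=
  relOrder_eq_of_pow_mem_iff fun m => by
    rw [orderOf_dvd_iff_pow_eq_one, ← QuotientGroup.mk_pow, QuotientGroup.eq_one_iff]

theorem psiRel_eq_card_mul_psi_quotient [Fintype G] (H : Subgroup G) [H.Normal]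
    [Fintype (G ⧸ H)] : psiRel G H = Nat.card H * psi (G ⧸ H) := by
  classical
  calc psiRel G H = ∑ p : (G ⧸ H) × H, orderOf p.1 := by
        simp only [psiRel, relOrder_eq_orderOf_mk]
        exact Fintype.sum_equiv Subgroup.groupEquivQuotientProdSubgroup _ _ fun _ => rfl
    _ = Nat.card H * psi (G ⧸ H) := by
        rw [Fintype.sum_prod_type, psi, Finset.mul_sum]
        simp [Nat.card_eq_fintype_card]

end RelOrder

theorem psi_eq_sum_divisors_mul_totient {G : Type*} [Group G] [Fintype G] [IsCyclic G] :
    psi G = ∑ d ∈ (Fintype.card G).divisors, d * d.totient := by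
  rw [psi, ← Finset.sum_fiberwise_of_maps_to (t := (Fintype.card G).divisors) (g := orderOf)
    fun x _ => Nat.mem_divisors.mpr ⟨orderOf_dvd_card, Fintype.card_ne_zero⟩]
  refine Finset.sum_congr rfl fun d hd => ?_
  rw [Finset.sum_congr rfl fun x hx => (Finset.mem_filter.mp hx).2, Finset.sum_const,
    IsCyclic.card_orderOf_eq_totient (Nat.dvd_of_mem_divisors hd), smul_eq_mul, mul_comm]

theorem SemidirectProduct.mem_range_inr_iff {N H : Type*} [Group N] [Group H]
    {φ : H →* MulAut N} {x : N ⋊[φ] H} : x ∈ (inr : H →* N ⋊[φ] H).range ↔ x.left = 1 :=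
  ⟨by rintro ⟨g, rfl⟩; rfl, fun h => ⟨x.right, by ext <;> simp [h]⟩⟩

theorem geom_sum_eq_zero_iff_pow_eq_one {K : Type*} [Field K] {u : K} (hu : u ≠ 1) (m : ℕ) :
    ∑ i ∈ Finset.range m, u ^ i = 0 ↔ u ^ m = 1 := by
  rw [← sub_eq_zero (a := u ^ m), ← geom_sum_mul, mul_eq_zero, or_iff_left (sub_ne_zero.mpr hu)]

section Frobenius

variable {F : Type*} [Field F]

theorem frobGroup_left_pow (n : Multiplicative F) (u : Fˣ) (m : ℕ) :
    ((⟨n, u⟩ : frobGroup F) ^ m).left =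
      Multiplicative.ofAdd ((∑ i ∈ Finset.range m, (u : F) ^ i) * n.toAdd) := by
  induction m with
  | zero => simp
  | succ m ih =>
    rw [pow_succ, SemidirectProduct.mul_left, ih, Finset.sum_range_succ]
    have hright : (⟨n, u⟩ ^ m : frobGroup F).right = u ^ m :=
      map_pow (SemidirectProduct.rightHom : frobGroup F →* Fˣ) _ m
    rw [hright, ← ofAdd_toAdd (fieldMulAction F _ _), ← ofAdd_add]
    congr 1
    change _ + (u ^ m : Fˣ) • n.toAdd = _
    rw [Units.smul_def, smul_eq_mul, Units.val_pow_eq_pow_val]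
    ring

theorem pow_mem_frobComplement_iff (n : Multiplicative F) (u : Fˣ) (m : ℕ) :
    (⟨n, u⟩ : frobGroup F) ^ m ∈ frobComplement F ↔
      n = 1 ∨ ∑ i ∈ Finset.range m, (u : F) ^ i = 0 := by
  rw [SemidirectProduct.mem_range_inr_iff, frobGroup_left_pow, ofAdd_eq_one, mul_eq_zero,
    or_comm, ← toAdd_eq_zero]

variable [DecidableEq F]

theorem relOrder_frobComplement (n : Multiplicative F) (u : Fˣ) :
    relOrder (frobComplement F) ⟨n, u⟩ =
      if n = 1 then 1 else if u = 1 then ringChar F else orderOf u := by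
  refine relOrder_eq_of_pow_mem_iff fun m => ?_
  rw [pow_mem_frobComplement_iff]
  split_ifs with hn hu
  · simp [hn]
  · subst hu
    rw [or_iff_right hn, Units.val_one]
    simpa using ringChar.spec F m
  · have hu' : (u : F) ≠ 1 := mt Units.val_eq_one.mp hu
    rw [or_iff_right hn, geom_sum_eq_zero_iff_pow_eq_one hu', orderOf_dvd_iff_pow_eq_one,
      Units.ext_iff, Units.val_pow_eq_pow_val, Units.val_one]

variable [Fintype F]

theorem psiRel_frobGroup :
    psiRel (frobGroup F) (frobComplement F) = (Fintype.card F - 1) * (ringChar F + psi Fˣ) := by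
  set S := ∑ u ∈ ({1}ᶜ : Finset Fˣ), orderOf u
  have hpsi : psi Fˣ = 1 + S := by rw [psi, Fintype.sum_eq_add_sum_compl 1, orderOf_one]
  have hrow (n : Multiplicative F) (hn : n ≠ 1) :
      ∑ u : Fˣ, relOrder (frobComplement F) ⟨n, u⟩ = ringChar F + S := by
    simp only [relOrder_frobComplement, if_neg hn]
    rw [Fintype.sum_eq_add_sum_compl 1, if_pos rfl]
    exact congrArg _ (Finset.sum_congr rfl fun u hu => if_neg (Finset.mem_compl.mp hu ∘
      Finset.mem_singleton.mpr))
  have hcompl : ({1}ᶜ : Finset (Multiplicative F)).card = Fintype.card F - 1 := by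
    rw [Finset.card_compl, Finset.card_singleton, Fintype.card_multiplicative]
  calc psiRel (frobGroup F) (frobComplement F)
      = ∑ n : Multiplicative F, ∑ u : Fˣ, relOrder (frobComplement F) ⟨n, u⟩ := by
        rw [psiRel, ← Fintype.sum_prod_type']
        exact Fintype.sum_equiv SemidirectProduct.equivProd _ _ fun _ => rfl
    _ = Fintype.card Fˣ + (Fintype.card F - 1) * (ringChar F + S) := by
        rw [Fintype.sum_eq_add_sum_compl 1, Finset.sum_congr rfl fun n hn =>
          hrow n (Finset.mem_compl.mp hn ∘ Finset.mem_singleton.mpr), Finset.sum_const, hcompl]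
        simp only [relOrder_frobComplement, if_true, Finset.sum_const, Finset.card_univ,
          smul_eq_mul, mul_one]
    _ = (Fintype.card F - 1) * (ringChar F + psi Fˣ) := by
        rw [Fintype.card_units, hpsi]
        ring

end Frobenius

theorem psiRel_frobenius_56 (F : Type*) [Field F] [Fintype F] [DecidableEq F] (hF : Fintype.card F = 8)
    (H7 : Subgroup (Multiplicative (ZMod 56))) (hH7 : Nat.card H7 = 7) :
    (psiRel (frobGroup F) (frobComplement F) : ℚ) /
        (psiRel (Multiplicative (ZMod 56)) H7 : ℚ) = 45 / 43 ∧ (45 : ℚ) / 43 > 1 := by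
  classical
  have hchar : ringChar F = 2 := FiniteField.even_card_iff_char_two.mpr (by rw [hF])
  have hpsi_units : psi Fˣ = 43 := by
    rw [psi_eq_sum_divisors_mul_totient, Fintype.card_units, hF]
    decide
  have hnum : psiRel (frobGroup F) (frobComplement F) = 7 * 45 := by
    rw [psiRel_frobGroup, hF, hchar, hpsi_units]
  have hcard_quot : Nat.card (Multiplicative (ZMod 56) ⧸ H7) = 8 := by
    have h := H7.card_eq_card_quotient_mul_card_subgroup
    rw [hH7, Nat.card_eq_fintype_card, Fintype.card_multiplicative, ZMod.card] at h
    omega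
  have : IsCyclic (Multiplicative (ZMod 56) ⧸ H7) :=
    isCyclic_of_surjective _ (QuotientGroup.mk'_surjective H7)
  have hden : psiRel (Multiplicative (ZMod 56)) H7 = 7 * 43 := by
    rw [psiRel_eq_card_mul_psi_quotient, hH7, psi_eq_sum_divisors_mul_totient,
      ← Nat.card_eq_fintype_card, hcard_quot]
    decide
  refine ⟨?_, by norm_num⟩
  rw [hnum, hden]
  norm_num
end
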